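/- Let α ∈ (0,1), let f̃(X) = tr(XᵀCX) with ∇f̃ Lipschitz of constant L on ℝ^{nd×d}, let G ∈ O(d)ⁿ, let ξ be a tangent vector at G, and set G⁺ = Exp_G(tξ) (blockwise matrix exponential retraction). Then f̃(G⁺) − f̃(G) ≥ t⟨∇f̃(G), ξ⟩ − (√d/2)‖∇f̃(G)‖_∞ t²‖ξ‖_F² − (L/2) t²‖ξ‖_F², where ‖∇f̃(G)‖_∞ = max_i ‖(∇f̃(G))ᵢ‖_F. In particular, if ξ = grad f̄(G) is the Riemannian gradient (so ⟨∇f̃(G), ξ⟩ = ‖ξ‖_F²) and t ≤ (1−α)/(nd + √d‖∇f̃(G)‖_∞/2 + L/2) appropriately, then f̃(G⁺) − f̃(G) ≥ α t ‖grad f̄(G)‖_F². -/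

import Mathlib

open Matrix

/-- The Frobenius norm of a real matrix. -/
noncomputable def frobNorm {m n : Type*} [Fintype m] [Fintype n]
    (A : Matrix m n ℝ) : ℝ :=
  Real.sqrt (∑ i, ∑ j, (A i j) ^ 2)

/-- The `i`-th `d × d` block of a block-column matrix `X ∈ ℝ^{nd×d}`. -/
def blk {n d : ℕ} (X : Matrix (Fin n × Fin d) (Fin d) ℝ) (i : Fin n) :
    Matrix (Fin d) (Fin d) ℝ :=
  Matrix.of fun a b => X (i, a) b

/-- Stack `n` blocks `B i ∈ ℝ^{d×d}` into a block-column matrix in `ℝ^{nd×d}`. -/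
def blockStack {n d : ℕ} (B : Fin n → Matrix (Fin d) (Fin d) ℝ) :
    Matrix (Fin n × Fin d) (Fin d) ℝ :=
  Matrix.of fun p b => B p.1 p.2 b

/-!
Write `Δ = G⁺ - G`. Because `f̃` is quadratic, `f̃(G⁺) - f̃(G) = ⟨∇f̃(G), Δ⟩ + ⟨Δ, CΔ⟩` exactly.
For a skew-symmetric block `E` the curve `s ↦ exp(sE)` stays in `O(d)` and so has speed `‖E‖_F`;
the mean value inequality, applied once and then to `exp(sE) - I - sE`, gives
`‖exp E - I‖_F ≤ ‖E‖_F` and `‖exp E - I - E‖_F ≤ ‖E‖_F² / 2`. The first gives `‖Δ‖_F ≤ t‖ξ‖_F`,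
which together with `‖CX‖_F ≤ (L/2)‖X‖_F` controls the quadratic term. By the second, the blocks
of `Δ - tξ` have norm at most `t²‖Eᵢ‖_F² / 2`, so pairing them block by block with `∇f̃(G)` costs
at most `(‖∇f̃(G)‖_∞ / 2) t²‖ξ‖_F²`, which is better than the claimed bound by the factor `√d`.
The second claim then reduces to arithmetic on the step size.
-/

open NormedSpace

section Frobenius

attribute [local instance] Matrix.frobeniusNormedAddCommGroup Matrix.frobeniusNormedSpace

variable {m n : Type*} [Fintype m] [Fintype n]

lemma frobNorm_eq_norm (A : Matrix m n ℝ) : frobNorm A = ‖A‖ := by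
  simp [frobNorm, frobenius_norm_def, Real.sqrt_eq_rpow]

lemma frobNorm_nonneg (A : Matrix m n ℝ) : 0 ≤ frobNorm A := Real.sqrt_nonneg _

lemma frobNorm_smul (c : ℝ) (A : Matrix m n ℝ) : frobNorm (c • A) = |c| * frobNorm A := by
  rw [frobNorm_eq_norm, frobNorm_eq_norm, norm_smul, Real.norm_eq_abs]

lemma frobNorm_eq_sqrt_trace (A : Matrix m n ℝ) : frobNorm A = √(trace (Aᵀ * A)) := by
  simp only [frobNorm, trace, diag, mul_apply, transpose_apply, sq]
  rw [Finset.sum_comm]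

lemma frobNorm_sq (A : Matrix m n ℝ) : frobNorm A ^ 2 = ∑ i, ∑ j, A i j ^ 2 :=
  Real.sq_sqrt (by positivity)

lemma abs_trace_transpose_mul_le (A B : Matrix m n ℝ) :
    |trace (Aᵀ * B)| ≤ frobNorm A * frobNorm B := by
  have htrace : trace (Aᵀ * B) = ∑ p : m × n, A p.1 p.2 * B p.1 p.2 := by
    simp only [trace, diag, mul_apply, transpose_apply, Fintype.sum_prod_type]
    exact Finset.sum_comm
  have hnorm (X : Matrix m n ℝ) : frobNorm X = √(∑ p : m × n, |X p.1 p.2| ^ 2) := by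
    simp only [frobNorm, sq_abs, Fintype.sum_prod_type]
  rw [htrace, hnorm A, hnorm B]
  refine (Finset.abs_sum_le_sum_abs _ _).trans ?_
  simpa only [abs_mul] using Real.sum_mul_le_sqrt_mul_sqrt Finset.univ
    (fun p : m × n => |A p.1 p.2|) (fun p => |B p.1 p.2|)

lemma frobNorm_mul_of_transpose_mul_eq_one [DecidableEq m] {Q : Matrix m m ℝ} (hQ : Qᵀ * Q = 1)
    (B : Matrix m n ℝ) : frobNorm (Q * B) = frobNorm B := by
  rw [frobNorm_eq_sqrt_trace, frobNorm_eq_sqrt_trace, transpose_mul, Matrix.mul_assoc,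
    ← Matrix.mul_assoc Qᵀ, hQ, Matrix.one_mul]

lemma frobNorm_mul_of_mul_transpose_eq_one [DecidableEq n] (B : Matrix m n ℝ) {Q : Matrix n n ℝ}
    (hQ : Q * Qᵀ = 1) : frobNorm (B * Q) = frobNorm B := by
  rw [frobNorm_eq_sqrt_trace, frobNorm_eq_sqrt_trace, transpose_mul, trace_mul_comm,
    Matrix.mul_assoc B, ← Matrix.mul_assoc Q, hQ, Matrix.one_mul, trace_mul_comm]

end Frobenius

section SkewExp

attribute [local instance] Matrix.frobeniusNormedAddCommGroup Matrix.frobeniusNormedSpace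
  Matrix.frobeniusNormedRing Matrix.frobeniusNormedAlgebra

variable {m : Type*} [Fintype m] [DecidableEq m] {A : Matrix m m ℝ}

lemma exp_mul_transpose_exp_of_transpose_eq_neg (hA : Aᵀ = -A) : exp A * (exp A)ᵀ = 1 := by
  rw [← exp_transpose, hA, ← exp_add_of_commute A (-A) (Commute.refl A).neg_right,
    add_neg_cancel, exp_zero]

lemma norm_exp_smul_sub_one_le (hA : Aᵀ = -A) (s : ℝ) : ‖exp (s • A) - 1‖ ≤ ‖A‖ * |s| := by
  have hderiv (u : ℝ) : HasDerivAt (fun u : ℝ => exp (u • A)) (A * exp (u • A)) u :=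
    hasDerivAt_exp_smul_const' A u
  have hbound (u : ℝ) : ‖A * exp (u • A)‖ = ‖A‖ := by
    rw [← frobNorm_eq_norm, ← frobNorm_eq_norm, frobNorm_mul_of_mul_transpose_eq_one]
    exact exp_mul_transpose_exp_of_transpose_eq_neg (by rw [transpose_smul, hA, smul_neg])
  simpa using convex_univ.norm_image_sub_le_of_norm_hasDerivWithin_le
    (fun u _ => (hderiv u).hasDerivWithinAt) (fun u _ => (hbound u).le)
    (Set.mem_univ 0) (Set.mem_univ s)

lemma frobNorm_exp_sub_one_le (hA : Aᵀ = -A) : frobNorm (exp A - 1) ≤ frobNorm A := by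
  simpa [frobNorm_eq_norm] using norm_exp_smul_sub_one_le hA 1

lemma frobNorm_exp_sub_one_sub_le (hA : Aᵀ = -A) :
    frobNorm (exp A - 1 - A) ≤ frobNorm A ^ 2 / 2 := by
  have hderiv (u : ℝ) : HasDerivAt (fun u : ℝ => exp (u • A) - 1 - u • A)
      (A * (exp (u • A) - 1)) u := by
    have h := ((hasDerivAt_exp_smul_const' A u).sub_const 1).sub ((hasDerivAt_id u).smul_const A)
    exact h.congr_deriv (by rw [one_smul, mul_sub_one]; rfl)
  have hB (u : ℝ) : HasDerivAt (fun s : ℝ => ‖A‖ ^ 2 / 2 * s ^ 2) (‖A‖ ^ 2 * u) u :=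
    ((hasDerivAt_pow 2 u).const_mul (‖A‖ ^ 2 / 2)).congr_deriv (by norm_num; ring)
  have hbound (u : ℝ) (hu : u ∈ Set.Ico (0 : ℝ) 1) : ‖A * (exp (u • A) - 1)‖ ≤ ‖A‖ ^ 2 * u :=
    calc ‖A * (exp (u • A) - 1)‖ ≤ ‖A‖ * (‖A‖ * |u|) :=
          (norm_mul_le _ _).trans (by gcongr; exact norm_exp_smul_sub_one_le hA u)
      _ = ‖A‖ ^ 2 * u := by rw [abs_of_nonneg hu.1]; ring
  simpa [frobNorm_eq_norm] using image_norm_le_of_norm_deriv_right_le_deriv_boundary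
    (fun u _ => (hderiv u).continuousAt.continuousWithinAt)
    (fun u _ => (hderiv u).hasDerivWithinAt) (by simp) hB hbound
    (Set.right_mem_Icc.2 zero_le_one)

end SkewExp

section Blocks

variable {n d : ℕ}

lemma blk_blockStack (B : Fin n → Matrix (Fin d) (Fin d) ℝ) (i : Fin n) :
    blk (blockStack B) i = B i := rfl

lemma trace_transpose_mul_eq_sum_blk (A B : Matrix (Fin n × Fin d) (Fin d) ℝ) :
    trace (Aᵀ * B) = ∑ i, trace ((blk A i)ᵀ * blk B i) := by
  simp only [trace, diag, mul_apply, transpose_apply, blk, of_apply, Fintype.sum_prod_type]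
  exact Finset.sum_comm

lemma frobNorm_sq_blockStack (B : Fin n → Matrix (Fin d) (Fin d) ℝ) :
    frobNorm (blockStack B) ^ 2 = ∑ i, frobNorm (B i) ^ 2 := by
  simp only [frobNorm_sq, blockStack, of_apply, Fintype.sum_prod_type]

lemma abs_trace_transpose_mul_blockStack_le (A : Matrix (Fin n × Fin d) (Fin d) ℝ)
    (B : Fin n → Matrix (Fin d) (Fin d) ℝ) :
    |trace (Aᵀ * blockStack B)| ≤ (⨆ i, frobNorm (blk A i)) * ∑ i, frobNorm (B i) := by
  rw [trace_transpose_mul_eq_sum_blk, Finset.mul_sum]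
  refine (Finset.abs_sum_le_sum_abs _ _).trans (Finset.sum_le_sum fun i _ => ?_)
  rw [blk_blockStack]
  have hle : frobNorm (blk A i) ≤ ⨆ i, frobNorm (blk A i) :=
    le_ciSup (f := fun i => frobNorm (blk A i)) (Set.finite_range _).bddAbove i
  exact (abs_trace_transpose_mul_le _ _).trans
    (mul_le_mul_of_nonneg_right hle (frobNorm_nonneg _))

end Blocks

section Retraction

variable {n d : ℕ}

/-- `Exp_G(ξ)` for the tangent vector `ξ = [G₁E₁; …; GₙEₙ]` at `G ∈ O(d)ⁿ`. -/
noncomputable def expRetraction (G : Matrix (Fin n × Fin d) (Fin d) ℝ)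
    (E : Fin n → Matrix (Fin d) (Fin d) ℝ) : Matrix (Fin n × Fin d) (Fin d) ℝ :=
  blockStack fun i => blk G i * exp (E i)

def tangentVector (G : Matrix (Fin n × Fin d) (Fin d) ℝ)
    (E : Fin n → Matrix (Fin d) (Fin d) ℝ) : Matrix (Fin n × Fin d) (Fin d) ℝ :=
  blockStack fun i => blk G i * E i

variable {G : Matrix (Fin n × Fin d) (Fin d) ℝ} {E : Fin n → Matrix (Fin d) (Fin d) ℝ}

lemma tangentVector_smul (c : ℝ) : tangentVector G (c • E) = c • tangentVector G E := by
  ext p b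
  simp [tangentVector, blockStack]

lemma expRetraction_sub_self :
    expRetraction G E - G = blockStack fun i => blk G i * (exp (E i) - 1) := by
  ext p b
  simp [expRetraction, blockStack, blk, mul_sub]

lemma expRetraction_sub_self_sub_tangentVector :
    expRetraction G E - G - tangentVector G E =
      blockStack fun i => blk G i * (exp (E i) - 1 - E i) := by
  ext p b
  simp [expRetraction, tangentVector, blockStack, blk, mul_sub]

lemma frobNorm_blockStack_blk_mul_sq (hG : ∀ i, (blk G i)ᵀ * blk G i = 1)
    (B : Fin n → Matrix (Fin d) (Fin d) ℝ) :
    frobNorm (blockStack fun i => blk G i * B i) ^ 2 = ∑ i, frobNorm (B i) ^ 2 := by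
  simp only [frobNorm_sq_blockStack, frobNorm_mul_of_transpose_mul_eq_one (hG _)]

lemma frobNorm_expRetraction_sub_self_le (hG : ∀ i, (blk G i)ᵀ * blk G i = 1)
    (hE : ∀ i, (E i)ᵀ = -E i) :
    frobNorm (expRetraction G E - G) ≤ frobNorm (tangentVector G E) := by
  refine pow_le_pow_iff_left₀ (frobNorm_nonneg _) (frobNorm_nonneg _) two_ne_zero |>.1 ?_
  rw [expRetraction_sub_self, tangentVector, frobNorm_blockStack_blk_mul_sq hG,
    frobNorm_blockStack_blk_mul_sq hG]
  gcongr with i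
  exacts [frobNorm_nonneg _, frobNorm_exp_sub_one_le (hE i)]

lemma abs_trace_transpose_mul_expRetraction_remainder_le (hG : ∀ i, (blk G i)ᵀ * blk G i = 1)
    (hE : ∀ i, (E i)ᵀ = -E i) (A : Matrix (Fin n × Fin d) (Fin d) ℝ) :
    |trace (Aᵀ * (expRetraction G E - G - tangentVector G E))| ≤
      (⨆ i, frobNorm (blk A i)) / 2 * frobNorm (tangentVector G E) ^ 2 := by
  rw [expRetraction_sub_self_sub_tangentVector, tangentVector,
    frobNorm_blockStack_blk_mul_sq hG, div_mul_eq_mul_div, mul_div_assoc, Finset.sum_div]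
  refine (abs_trace_transpose_mul_blockStack_le A _).trans ?_
  gcongr with i
  · exact Real.iSup_nonneg fun i => frobNorm_nonneg _
  · rw [frobNorm_mul_of_transpose_mul_eq_one (hG i)]
    exact frobNorm_exp_sub_one_sub_le (hE i)

end Retraction

section QuadraticForm

variable {m n : Type*} [Fintype m] [Fintype n] {C : Matrix m m ℝ}

lemma trace_transpose_mul_mul_sub (hC : Cᵀ = C) (X Y : Matrix m n ℝ) :
    trace (Yᵀ * C * Y) - trace (Xᵀ * C * X) =
      trace (((2 : ℝ) • (C * X))ᵀ * (Y - X)) + trace ((Y - X)ᵀ * (C * (Y - X))) := by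
  have hsymm : trace (Yᵀ * (C * X)) = trace (Xᵀ * (C * Y)) := by
    rw [← trace_transpose, transpose_mul, transpose_mul, hC, transpose_transpose,
      Matrix.mul_assoc]
  simp only [transpose_sub, transpose_smul, transpose_mul, hC, Matrix.sub_mul, Matrix.mul_sub,
    smul_mul, trace_sub, trace_smul, Matrix.mul_assoc, smul_eq_mul]
  linarith

lemma frobNorm_mul_le_of_lipschitz {L : ℝ}
    (hL : ∀ X Y : Matrix m n ℝ,
      frobNorm ((2 : ℝ) • (C * X) - (2 : ℝ) • (C * Y)) ≤ L * frobNorm (X - Y))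
    (X : Matrix m n ℝ) : frobNorm (C * X) ≤ L / 2 * frobNorm X := by
  have h := hL X 0
  rw [Matrix.mul_zero, smul_zero, sub_zero, sub_zero, frobNorm_smul, abs_two] at h
  linarith

lemma neg_mul_sq_le_trace_transpose_mul_mul {K r : ℝ}
    (hC : ∀ X : Matrix m n ℝ, frobNorm (C * X) ≤ K * frobNorm X) {D : Matrix m n ℝ}
    (hD : frobNorm D ≤ r) (hKr : 0 ≤ K * r) : -(K * r ^ 2) ≤ trace (Dᵀ * (C * D)) := by
  have hKD : 0 ≤ K * frobNorm D := (frobNorm_nonneg _).trans (hC D)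
  -- `K r² - K ‖D‖² = (r - ‖D‖) (K r) + (K ‖D‖) (r - ‖D‖)` needs no sign condition on `K`
  have hsq : frobNorm D * frobNorm (C * D) ≤ K * r ^ 2 := by
    nlinarith [mul_le_mul_of_nonneg_left (hC D) (frobNorm_nonneg D),
      mul_nonneg (sub_nonneg.2 hD) hKr, mul_nonneg hKD (sub_nonneg.2 hD)]
  linarith [neg_abs_le (trace (Dᵀ * (C * D))), abs_trace_transpose_mul_le D (C * D)]

end QuadraticForm

lemma trace_expRetraction_sub_trace_ge {n d : ℕ} {C : Matrix (Fin n × Fin d) (Fin n × Fin d) ℝ}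
    (hC : Cᵀ = C) {L : ℝ}
    (hL : ∀ X Y : Matrix (Fin n × Fin d) (Fin d) ℝ,
      frobNorm ((2 : ℝ) • (C * X) - (2 : ℝ) • (C * Y)) ≤ L * frobNorm (X - Y))
    {G : Matrix (Fin n × Fin d) (Fin d) ℝ} (hG : ∀ i, (blk G i)ᵀ * blk G i = 1)
    {E : Fin n → Matrix (Fin d) (Fin d) ℝ} (hE : ∀ i, (E i)ᵀ = -E i) :
    trace ((expRetraction G E)ᵀ * C * expRetraction G E) - trace (Gᵀ * C * G) ≥
      trace (((2 : ℝ) • (C * G))ᵀ * tangentVector G E) -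
        (⨆ i, frobNorm (blk ((2 : ℝ) • (C * G)) i)) / 2 * frobNorm (tangentVector G E) ^ 2 -
        L / 2 * frobNorm (tangentVector G E) ^ 2 := by
  set P := expRetraction G E
  set ξ := tangentVector G E
  set A := (2 : ℝ) • (C * G)
  have hsplit : trace (Aᵀ * (P - G)) = trace (Aᵀ * ξ) + trace (Aᵀ * (P - G - ξ)) := by
    rw [← trace_add, ← Matrix.mul_add, add_sub_cancel]
  have hremainder := abs_trace_transpose_mul_expRetraction_remainder_le hG hE A
  have hquadratic := neg_mul_sq_le_trace_transpose_mul_mul (frobNorm_mul_le_of_lipschitz hL)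
    (frobNorm_expRetraction_sub_self_le hG hE)
    ((frobNorm_nonneg _).trans (frobNorm_mul_le_of_lipschitz hL ξ))
  linarith [trace_transpose_mul_mul_sub hC G P, neg_abs_le (trace (Aᵀ * (P - G - ξ)))]

lemma mul_mul_sq_le_of_le_div {α t q a N X : ℝ} (hα : α ≤ 1) (ht : 0 ≤ t) (hN : 0 ≤ N)
    (hta : t ≤ (1 - α) / (N + a)) (hX : t * q ^ 2 - a * t ^ 2 * q ^ 2 ≤ X) :
    α * t * q ^ 2 ≤ X := by
  have hat : a * t ≤ 1 - α := by
    rcases le_or_gt (N + a) 0 with hNa | hNa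
    · have ht0 : t = 0 :=
        le_antisymm (hta.trans (div_nonpos_of_nonneg_of_nonpos (by linarith) hNa)) ht
      simp [ht0, hα]
    · nlinarith [(le_div_iff₀ hNa).1 hta]
  nlinarith [mul_nonneg (mul_nonneg ht (sq_nonneg q)) (sub_nonneg.2 hat)]

/-- Ascent estimate along the blockwise exponential retraction for
`f̃(X) = tr(XᵀCX)` with `L`-Lipschitz Euclidean gradient `∇f̃(X) = 2CX`:
for `G ∈ O(d)ⁿ`, tangent direction `ξ = [G₁E₁;…;GₙEₙ]` and `G⁺ = Exp_G(tξ)`,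
`f̃(G⁺) − f̃(G) ≥ t⟨∇f̃(G), ξ⟩ − (√d/2)‖∇f̃(G)‖_∞ t²‖ξ‖_F² − (L/2)t²‖ξ‖_F²`;
in particular, if `ξ` is the Riemannian gradient (so `⟨∇f̃(G), ξ⟩ = ‖ξ‖_F²`) and
`t ≤ (1−α)/(nd + √d‖∇f̃(G)‖_∞/2 + L/2)`, then `f̃(G⁺) − f̃(G) ≥ αt‖ξ‖_F²`. -/
theorem stmt_18 (n d : ℕ) (α t L : ℝ) (hα : α ∈ Set.Ioo (0 : ℝ) 1) (ht : 0 ≤ t)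
    (C : Matrix (Fin n × Fin d) (Fin n × Fin d) ℝ) (hC : Cᵀ = C)
    (hL : ∀ X Y : Matrix (Fin n × Fin d) (Fin d) ℝ,
      frobNorm ((2 : ℝ) • (C * X) - (2 : ℝ) • (C * Y)) ≤ L * frobNorm (X - Y))
    (G : Matrix (Fin n × Fin d) (Fin d) ℝ)
    (hG : ∀ i, (blk G i)ᵀ * blk G i = 1 ∧ blk G i * (blk G i)ᵀ = 1)
    (E : Fin n → Matrix (Fin d) (Fin d) ℝ) (hE : ∀ i, (E i)ᵀ = -(E i)) :
    Matrix.trace ((blockStack fun i => blk G i * NormedSpace.exp (t • E i))ᵀ *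
          C * (blockStack fun i => blk G i * NormedSpace.exp (t • E i))) -
        Matrix.trace (Gᵀ * C * G) ≥
      t * Matrix.trace (((2 : ℝ) • (C * G))ᵀ * blockStack fun i => blk G i * E i) -
        Real.sqrt d / 2 * (⨆ i : Fin n, frobNorm (blk ((2 : ℝ) • (C * G)) i)) *
          t ^ 2 * frobNorm (blockStack fun i => blk G i * E i) ^ 2 -
        L / 2 * t ^ 2 * frobNorm (blockStack fun i => blk G i * E i) ^ 2 ∧
    (Matrix.trace (((2 : ℝ) • (C * G))ᵀ * blockStack fun i => blk G i * E i) =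
        frobNorm (blockStack fun i => blk G i * E i) ^ 2 →
      t ≤ (1 - α) / ((n : ℝ) * d +
          Real.sqrt d * (⨆ i : Fin n, frobNorm (blk ((2 : ℝ) • (C * G)) i)) / 2 +
          L / 2) →
      Matrix.trace ((blockStack fun i => blk G i * NormedSpace.exp (t • E i))ᵀ *
            C * (blockStack fun i => blk G i * NormedSpace.exp (t • E i))) -
          Matrix.trace (Gᵀ * C * G) ≥
        α * t * frobNorm (blockStack fun i => blk G i * E i) ^ 2) := by
  obtain ⟨-, hα1⟩ := hα
  have hskew : ∀ i, ((t • E) i)ᵀ = -(t • E) i := fun i => by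
    rw [Pi.smul_apply, transpose_smul, hE i, smul_neg]
  have hstep := trace_expRetraction_sub_trace_ge hC hL (fun i => (hG i).1) hskew
  rw [tangentVector_smul, Matrix.mul_smul, trace_smul, smul_eq_mul, frobNorm_smul,
    abs_of_nonneg ht, mul_pow] at hstep
  rw [show (blockStack fun i => blk G i * exp (t • E i)) = expRetraction G (t • E) from rfl,
    show (blockStack fun i => blk G i * E i) = tangentVector G E from rfl]
  set M := ⨆ i, frobNorm (blk ((2 : ℝ) • (C * G)) i)
  set q := frobNorm (tangentVector G E)
  have hM : M * q ^ 2 ≤ √d * M * q ^ 2 := by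
    rcases Nat.eq_zero_or_pos d with rfl | hd
    · simp [q, frobNorm]
    · have hM0 : 0 ≤ M := Real.iSup_nonneg fun i => frobNorm_nonneg _
      have hd1 : 1 ≤ √(d : ℝ) := Real.one_le_sqrt.2 (by exact_mod_cast hd)
      nlinarith [mul_nonneg hM0 (sq_nonneg q)]
  have hM_scaled := mul_le_mul_of_nonneg_left hM (sq_nonneg t)
  refine ⟨by linarith, fun hgrad hstepsize => ?_⟩
  rw [hgrad] at hstep
  rw [add_assoc] at hstepsize
  exact mul_mul_sq_le_of_le_div hα1.le ht (by positivity) hstepsize (by linarith)
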